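/- arXiv:2311.02483 — 2 statements merged into one kernel-verified Lean document; each statement's English description precedes it below -/
import Mathlib

section
/- In a quantum-Wajsberg algebra, if x C y, x C z and y C z pairwise (u C v meaning u ⊓ v = v ⊓ u), then (x ⊓ y) ⊓ z = z ⊓ (x ⊓ y); consequently the commutative center Z(X) = {x : x C y for all y} is closed under ⊓. -/
class InvBEAlgebra (X : Type*) extends One X, Zero X where
  imp : X → X → X
  imp_self : ∀ x : X, imp x x = 1
  imp_one : ∀ x : X, imp x 1 = 1
  one_imp : ∀ x : X, imp 1 x = x
  exchange : ∀ x y z : X, imp x (imp y z) = imp y (imp x z)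
  zero_imp : ∀ x : X, imp 0 x = 1
  involutive : ∀ x : X, imp (imp x 0) 0 = x

namespace InvBEAlgebra

variable {X : Type*} [InvBEAlgebra X]

def star (x : X) : X := imp x 0

def inf (x y : X) : X := star (imp (imp (star x) (star y)) (star y))

def sup (x y : X) : X := imp (imp x y) y

def odot (x y : X) : X := star (imp x (star y))

def leQ (x y : X) : Prop := x = inf x y

end InvBEAlgebra

class QWAlgebra (X : Type*) extends InvBEAlgebra X where
  qw : ∀ x y z : X, imp x (InvBEAlgebra.inf (InvBEAlgebra.inf x y) (InvBEAlgebra.inf z x)) =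
        InvBEAlgebra.inf (imp x y) (imp x z)

open InvBEAlgebra

section Lemmas

variable {X : Type*} [QWAlgebra X]

local prefix:max "★" => InvBEAlgebra.star

private lemma ss (x : X) : ★ (★ x) = x := involutive x

private lemma imp_star (x y : X) : imp x (★ y) = imp y (★ x) := exchange x y 0

private lemma contra (x y : X) : imp x y = imp (★ y) (★ x) := by
  conv_lhs => rw [← ss y]
  exact imp_star x (★ y)

private lemma sOne : ★ (1 : X) = 0 := one_imp 0

private lemma sZero : ★ (0 : X) = 1 := zero_imp 0

private lemma star_imp (x y : X) : ★ (imp x y) = odot x (★ y) := by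
  show ★ (imp x y) = ★ (imp x (★ (★ y)))
  rw [ss]

private lemma star_odot (x y : X) : ★ (odot x y) = imp x (★ y) := ss _

private lemma odot_comm (x y : X) : odot x y = odot y x := congrArg (InvBEAlgebra.star) (imp_star x y)

private lemma odot_assoc (x y z : X) : odot (odot x y) z = odot x (odot y z) := by
  show ★ (imp (★ (imp x (★ y))) (★ z)) = ★ (imp x (★ (odot y z)))
  rw [star_odot]
  apply congrArg (InvBEAlgebra.star)
  calc imp (★ (imp x (★ y))) (★ z)
      = imp z (★ (★ (imp x (★ y)))) := imp_star _ z
    _ = imp z (imp x (★ y)) := by rw [ss]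
    _ = imp x (imp z (★ y)) := exchange z x _
    _ = imp x (imp y (★ z)) := by rw [imp_star z y]

private lemma inf_eq (x y : X) : inf x y = ★ (imp (imp y x) (★ y)) := by
  show ★ (imp (imp (★ x) (★ y)) (★ y)) = ★ (imp (imp y x) (★ y))
  rw [← contra y x]

private lemma inf_odot (x y : X) : inf x y = odot y (imp y x) := by
  rw [inf_eq]
  show ★ (imp (imp y x) (★ y)) = ★ (imp y (★ (imp y x)))
  rw [imp_star y (imp y x)]

private lemma inf_zero (x : X) : inf x 0 = 0 := by
  show ★ (imp (imp (★ x) (★ (0:X))) (★ (0:X))) = 0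
  rw [sZero, InvBEAlgebra.imp_one, sOne]

private lemma zero_inf (x : X) : inf 0 x = 0 := by
  show ★ (imp (imp (★ (0:X)) (★ x)) (★ x)) = 0
  rw [sZero, one_imp, InvBEAlgebra.imp_self, sOne]

private lemma lemF (x z : X) : inf (★ x) (imp x z) = ★ x := by
  have h := QWAlgebra.qw x 0 z
  rw [inf_zero, zero_inf] at h
  exact h.symm

private lemma lemE1 (x z : X) :
    imp (imp (imp x z) (★ x)) (★ (imp x z)) = x := by
  have h := lemF x z
  rw [inf_eq] at h
  have h2 := congrArg (InvBEAlgebra.star) h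
  rwa [ss, ss] at h2

private lemma lemFform (a z : X) : imp (imp a z) (inf z a) = a := by
  rw [inf_eq]
  calc imp (imp a z) (★ (imp (imp a z) (★ a)))
      = imp (imp (imp a z) (★ a)) (★ (imp a z)) := imp_star _ _
    _ = a := lemE1 a z

private lemma lemFprime (a z : X) : inf a (imp (★ a) z) = a := by
  have h := lemF (★ a) z
  rwa [ss] at h

private lemma lemD3 (x y : X) :
    imp (imp (imp x y) (★ x)) (★ x) = imp x y := by
  have h1 := lemE1 x y
  have h2 : imp (imp x y) (★ (imp (imp x y) (★ x))) = x := by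
    rw [imp_star]; exact h1
  have h3 := lemE1 (imp x y) (★ (imp (imp x y) (★ x)))
  rw [h2] at h3
  rw [imp_star x (imp x y)] at h3
  exact h3

private lemma lemD3inf (x y : X) : imp x (inf y x) = imp x y := by
  rw [inf_eq]
  calc imp x (★ (imp (imp x y) (★ x)))
      = imp (imp (imp x y) (★ x)) (★ x) := imp_star _ _
    _ = imp x y := lemD3 x y

private lemma lemD3odot (x y : X) : imp x (odot x (imp x y)) = imp x y := by
  rw [← inf_odot y x]
  exact lemD3inf x y

private lemma zsCore (b t : X) : odot b (imp b (odot b t)) = odot b t := by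
  have h : imp b (★ (imp b (odot b t))) = imp b (★ t) := by
    rw [star_imp b (odot b t), star_odot, lemD3odot]
  show ★ (imp b (★ (imp b (odot b t)))) = odot b t
  rw [h]
  rfl

private lemma master (a b t : X) :
    inf a (odot b t) = odot b (inf (imp b a) (imp b (odot b t))) := by
  have h0 : odot b (imp b (odot b t)) = odot b t := zsCore b t
  have h1 : imp (odot b t) a = imp (imp b (odot b t)) (imp b a) := by
    calc imp (odot b t) a
        = imp (★ a) (★ (odot b t)) := contra _ _
      _ = imp (★ a) (★ (odot b (imp b (odot b t)))) := by rw [h0]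
      _ = imp (★ a) (imp b (★ (imp b (odot b t)))) := by rw [star_odot]
      _ = imp b (imp (★ a) (★ (imp b (odot b t)))) := exchange _ b _
      _ = imp b (imp (imp b (odot b t)) a) := by rw [← contra]
      _ = imp (imp b (odot b t)) (imp b a) := exchange b _ a
  calc inf a (odot b t)
      = odot (odot b t) (imp (odot b t) a) := inf_odot a _
    _ = odot (odot b (imp b (odot b t))) (imp (odot b t) a) := by rw [h0]
    _ = odot b (odot (imp b (odot b t)) (imp (odot b t) a)) := odot_assoc _ _ _
    _ = odot b (odot (imp b (odot b t)) (imp (imp b (odot b t)) (imp b a))) := by rw [h1]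
    _ = odot b (inf (imp b a) (imp b (odot b t))) := by rw [← inf_odot]

private lemma lemN1g (a b t : X) :
    inf a (odot b t) = inf (inf a b) (odot b t) := by
  rw [master a b t, master (inf a b) b t, lemD3inf]

private lemma dag (u b c : X) :
    inf u (inf b c) = odot c (inf (imp c u) (imp c b)) := by
  rw [inf_odot b c, master u c (imp c b), lemD3odot]

private lemma lemT (s b c : X) :
    inf (imp c (odot b s)) (imp c b) = imp c (odot b s) := by
  have hW1 : imp (★ (imp c (odot b s))) (inf (★ s) b) = imp c b := by
    calc imp (★ (imp c (odot b s))) (inf (★ s) b)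
        = imp (★ (inf (★ s) b)) (★ (★ (imp c (odot b s)))) := contra _ _
      _ = imp (★ (inf (★ s) b)) (imp c (odot b s)) := by rw [ss]
      _ = imp c (imp (★ (inf (★ s) b)) (odot b s)) := exchange _ c _
      _ = imp c (imp (imp b (★ s)) (inf (★ s) b)) := by
            apply congrArg (imp c)
            exact (contra (imp b (★ s)) (inf (★ s) b)).symm
      _ = imp c b := by rw [lemFform b (★ s)]
  have hT2 : imp (imp (imp c b) (imp c (odot b s))) (imp c (odot b s)) = imp c b := by
    have h := lemD3 (★ (imp c (odot b s))) (inf (★ s) b)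
    rw [ss, hW1] at h
    exact h
  calc inf (imp c (odot b s)) (imp c b)
      = odot (imp c b) (imp (imp c b) (imp c (odot b s))) := inf_odot _ _
    _ = odot (imp (imp c b) (imp c (odot b s))) (imp c b) := odot_comm _ _
    _ = odot (imp (imp c b) (imp c (odot b s)))
          (imp (imp (imp c b) (imp c (odot b s))) (imp c (odot b s))) := by rw [hT2]
    _ = inf (imp c (odot b s)) (imp (imp c b) (imp c (odot b s))) := (inf_odot _ _).symm
    _ = inf (imp c (odot b s))
          (imp (★ (imp c (odot b s))) (★ (imp c b))) := by rw [← contra]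
    _ = imp c (odot b s) := lemFprime _ _

private lemma gR1 (s b c : X) :
    inf (odot b s) (inf b c) = inf (odot b s) c := by
  rw [dag, lemT, ← inf_odot]

private lemma lassoc {b c : X} (h : inf b c = inf c b) (a : X) :
    inf a (inf b c) = inf (inf a b) c := by
  calc inf a (inf b c)
      = inf a (inf c b) := by rw [h]
    _ = inf a (odot b (imp b c)) := by rw [← inf_odot c b]
    _ = inf (inf a b) (odot b (imp b c)) := lemN1g a b _
    _ = inf (inf a b) (inf c b) := by rw [← inf_odot c b]
    _ = inf (inf a b) (inf b c) := by rw [h]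
    _ = inf (odot b (imp b a)) (inf b c) := by rw [← inf_odot a b]
    _ = inf (odot b (imp b a)) c := gR1 _ b c
    _ = inf (inf a b) c := by rw [← inf_odot a b]

private lemma main1 {x y z : X} (hxy : inf x y = inf y x) (hxz : inf x z = inf z x)
    (hyz : inf y z = inf z y) : inf (inf x y) z = inf z (inf x y) := by
  have h1 : inf z (inf x y) = inf (inf z x) y := lassoc hxy z
  have h2 : inf x (inf z y) = inf (inf x z) y := lassoc hyz.symm x
  have h3 : inf x (inf y z) = inf (inf x y) z := lassoc hyz x
  calc inf (inf x y) z
      = inf x (inf y z) := h3.symm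
    _ = inf x (inf z y) := by rw [hyz]
    _ = inf (inf x z) y := h2
    _ = inf (inf z x) y := by rw [hxz]
    _ = inf z (inf x y) := h1.symm

end Lemmas

theorem stmt15 {X : Type*} [QWAlgebra X] :
    (∀ x y z : X, inf x y = inf y x → inf x z = inf z x → inf y z = inf z y →
      inf (inf x y) z = inf z (inf x y)) ∧
    (∀ x y : X, (∀ u : X, inf x u = inf u x) → (∀ u : X, inf y u = inf u y) →
      ∀ u : X, inf (inf x y) u = inf u (inf x y)) := by
  constructor
  · intro x y z hxy hxz hyz
    exact main1 hxy hxz hyz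
  · intro x y hx hy u
    exact main1 (hx y) (hx u) (hy u)
end

section
/- In a quantum-Wajsberg algebra, O(X) = {x : x = x* → x} equals {x : (x* → x) → x = 1} (i.e., x* ⊔ x = 1). -/
open InvBEAlgebra

section Aux
variable {X : Type*} [InvBEAlgebra X]

lemma my_star_star (x : X) : star (star x) = x := InvBEAlgebra.involutive x

lemma my_star_one : star (1 : X) = 0 := InvBEAlgebra.one_imp 0

lemma my_star_zero : star (0 : X) = 1 := InvBEAlgebra.zero_imp 0

lemma my_inf_self (a : X) : inf a a = a := by
  unfold inf
  rw [InvBEAlgebra.imp_self, InvBEAlgebra.one_imp, my_star_star]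

lemma my_inf_zero (a : X) : inf a (0 : X) = 0 := by
  unfold inf
  rw [my_star_zero, InvBEAlgebra.imp_one, my_star_one]

lemma my_inf_star (x : X) : inf x (star x) = star (imp (imp (star x) x) x) := by
  unfold inf
  rw [my_star_star]

end Aux

theorem stmt18 {X : Type*} [QWAlgebra X] (x : X) :
    x = imp (star x) x ↔ imp (imp (star x) x) x = 1 := by
  constructor
  · intro h
    rw [← h, InvBEAlgebra.imp_self]
  · intro h
    have hq := QWAlgebra.qw (star x) x x
    rw [my_inf_star, h, my_star_one, my_inf_zero, my_inf_self] at hq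
    calc x = star (star x) := (my_star_star x).symm
      _ = imp (star x) 0 := rfl
      _ = imp (star x) x := hq
end
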